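/- Let Z be the Markov chain on {0,1,...,N} with P(0→1)=1 and, for 1 ≤ i ≤ N−1, P(i→i+1) = p(i) ≤ 1/2 − 2C·i/K and P(i→i−1) = 1 − p(i), where C > 0 and N = ⌊εK⌋. Then for K large enough and any starting state 0 ≤ z ≤ ⌊εK/2⌋/2, P_z(τ_N < τ_0) ≤ C₁ e^{−C₂ ε² K} for constants C₁, C₂ > 0 depending only on C (and ε being small enough). -/

import Mathlib

set_option maxHeartbeats 1000000

private lemma one_le_prod_real (s : Finset ℕ) (f : ℕ → ℝ) (h : ∀ i ∈ s, 1 ≤ f i) :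
    1 ≤ ∏ i ∈ s, f i := by
  calc (1:ℝ) = ∏ _i ∈ s, (1:ℝ) := by rw [Finset.prod_const_one]
    _ ≤ ∏ i ∈ s, f i := Finset.prod_le_prod (fun _ _ => zero_le_one) h

private lemma prod_mono_subset_real (s t : Finset ℕ) (f : ℕ → ℝ) (hst : s ⊆ t)
    (h : ∀ i ∈ t, 1 ≤ f i) : ∏ i ∈ s, f i ≤ ∏ i ∈ t, f i := by
  rw [← Finset.prod_sdiff hst]
  have h1 : (1:ℝ) ≤ ∏ i ∈ t \ s, f i :=
    one_le_prod_real _ _ (fun i hi => h i (Finset.mem_sdiff.mp hi).1)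
  have h2 : (0:ℝ) ≤ ∏ i ∈ s, f i :=
    le_trans zero_le_one (one_le_prod_real _ _ (fun i hi => h i (hst hi)))
  nlinarith

/-- For the Markov chain on `{0,…,N}`, `N = ⌊εK⌋`, with `P(0→1) = 1` and
upward probabilities `p i ≤ 1/2 − 2C i/K` for `1 ≤ i ≤ N−1`, the exit probability
`P_z(τ_N < τ_0)` — given by the potential-theoretic formula — is at most
`C₁ e^{−C₂ ε² K}` for all starting states `z ≤ ⌊εK/2⌋/2`, for `K` large enough and `ε`
small enough, with `C₁, C₂` depending only on `C`. -/
theorem stmt15 (C : ℝ) (hC : 0 < C) :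
    ∃ C₁ > (0:ℝ), ∃ C₂ > (0:ℝ), ∃ ε₀ > (0:ℝ), ∀ ε : ℝ, 0 < ε → ε < ε₀ →
      ∃ K₀ : ℕ, ∀ K : ℕ, K₀ ≤ K →
        ∀ p : ℕ → ℝ,
          (∀ i : ℕ, 1 ≤ i → i ≤ Nat.floor (ε * K) - 1 →
            0 < p i ∧ p i < 1 ∧ p i ≤ 1 / 2 - 2 * C * i / K) →
          ∀ z : ℕ, (z : ℝ) ≤ (Nat.floor (ε * K / 2) : ℝ) / 2 →
            (∑ i ∈ Finset.Icc 1 z, ∏ j ∈ Finset.Icc 1 (i - 1), (1 - p j) / p j) /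
              (∑ i ∈ Finset.Icc 1 (Nat.floor (ε * K)),
                ∏ j ∈ Finset.Icc 1 (i - 1), (1 - p j) / p j)
              ≤ C₁ * Real.exp (-C₂ * ε ^ 2 * K) := by
  refine ⟨1, one_pos, C/8, by positivity, min 1 (1/(8*C)), by positivity, ?_⟩
  intro ε hε hεlt
  have hε1 : ε ≤ 1 := le_of_lt (lt_of_lt_of_le hεlt (min_le_left _ _))
  have hεC : C * ε ≤ 1/8 := by
    have := lt_of_lt_of_le hεlt (min_le_right _ _)
    rw [lt_div_iff₀ (by positivity)] at this
    nlinarith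
  have ha : 0 < C * ε^2 / 8 := by positivity
  have hev : ∀ᶠ K : ℕ in Filter.atTop,
      (4:ℝ) ≤ ε * K ∧ (K:ℝ) ≤ Real.exp (C * ε^2 * K / 8) := by
    have ht : Filter.Tendsto (fun K : ℕ => C * ε^2 / 8 * K) Filter.atTop Filter.atTop :=
      (tendsto_natCast_atTop_atTop).const_mul_atTop ha
    have h1 : ∀ᶠ K : ℕ in Filter.atTop, (4:ℝ) ≤ ε * K :=
      ((tendsto_natCast_atTop_atTop (R := ℝ)).const_mul_atTop hε).eventually_ge_atTop 4
    have h2 := ht.eventually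
      ((Real.tendsto_exp_div_pow_atTop 1).eventually_ge_atTop (1/(C*ε^2/8)))
    have h3 := ht.eventually_ge_atTop 1
    filter_upwards [h1, h2, h3] with K hK1 hK2 hK3
    refine ⟨hK1, ?_⟩
    have hpos : (0:ℝ) < (C * ε^2 / 8 * K)^1 := by
      simpa using lt_of_lt_of_le one_pos hK3
    rw [le_div_iff₀ hpos] at hK2
    have h4 : 1/(C*ε^2/8) * (C * ε^2/8 * K)^1 = (K:ℝ) := by
      field_simp
    calc (K:ℝ) = 1/(C*ε^2/8) * (C * ε^2/8 * K)^1 := h4.symm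
      _ ≤ Real.exp (C * ε^2 / 8 * K) := hK2
      _ = Real.exp (C * ε^2 * K / 8) := by ring_nf
  obtain ⟨K₀, hK₀⟩ := Filter.eventually_atTop.mp hev
  refine ⟨K₀, ?_⟩
  intro K hK p hp z hz
  obtain ⟨hεK, hKexp⟩ := hK₀ K hK
  set N := Nat.floor (ε * K) with hN
  set M := Nat.floor (ε * K / 2) with hM
  set ρ : ℕ → ℝ := fun j => (1 - p j) / p j with hρ
  have hKpos : (0:ℝ) < K := by nlinarith
  have hNle : (N:ℝ) ≤ ε * K := Nat.floor_le (by positivity)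
  have hNgt : ε * K - 1 < (N:ℝ) := Nat.sub_one_lt_floor _
  have hMle : (M:ℝ) ≤ ε * K / 2 := Nat.floor_le (by positivity)
  have hMgt : ε * K / 2 - 1 < (M:ℝ) := Nat.sub_one_lt_floor _
  have hM4 : ε * K / 4 ≤ (M:ℝ) := by linarith
  have hM2 : 2 ≤ M := by
    have : (1:ℝ) < (M:ℝ) := by linarith
    exact_mod_cast this
  have hMN : M + 1 < N := by
    have : ((M:ℝ) + 1) < (N:ℝ) := by push_cast; linarith
    exact_mod_cast this
  have hN1 : 1 ≤ N := by omega
  have hzM : z ≤ M := by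
    have h0 : (0:ℝ) ≤ (M:ℝ) := Nat.cast_nonneg _
    have : (z:ℝ) ≤ (M:ℝ) := by linarith
    exact_mod_cast this
  have hρ1 : ∀ j : ℕ, 1 ≤ j → j ≤ N - 1 → 1 ≤ ρ j := by
    intro j hj1 hj2
    obtain ⟨hp0, _, hp2⟩ := hp j hj1 hj2
    have hjK : 0 ≤ 2 * C * (j:ℝ) / K := by positivity
    rw [hρ]; dsimp only
    rw [le_div_iff₀ hp0]
    linarith
  have hρ2 : ∀ j : ℕ, M ≤ j → j ≤ N - 1 → 1 + 2*C*ε ≤ ρ j := by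
    intro j hj1 hj2
    obtain ⟨hp0, _, hp2⟩ := hp j (by omega) hj2
    have hjr : ε * K / 4 ≤ (j:ℝ) := le_trans hM4 (by exact_mod_cast hj1)
    have hfrac : C * ε / 2 ≤ 2 * C * (j:ℝ) / K := by
      rw [le_div_iff₀ hKpos]
      nlinarith
    have hpj : p j ≤ 1/2 - C*ε/2 := by linarith
    rw [hρ]; dsimp only
    rw [le_div_iff₀ hp0]
    nlinarith [sq_nonneg (C*ε), mul_pos hC hε]
  have hterm1 : ∀ i ∈ Finset.Icc 1 N, (1:ℝ) ≤ ∏ j ∈ Finset.Icc 1 (i-1), ρ j := by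
    intro i hi
    rw [Finset.mem_Icc] at hi
    refine one_le_prod_real _ _ fun j hj => ?_
    rw [Finset.mem_Icc] at hj
    exact hρ1 j hj.1 (by omega)
  have hDpos : (0:ℝ) < ∑ i ∈ Finset.Icc 1 N, ∏ j ∈ Finset.Icc 1 (i-1), ρ j := by
    refine Finset.sum_pos (fun i hi => lt_of_lt_of_le one_pos (hterm1 i hi)) ?_
    exact ⟨1, Finset.mem_Icc.mpr ⟨le_refl 1, hN1⟩⟩
  rcases Nat.eq_zero_or_pos z with hz0 | hz1
  · subst hz0
    rw [show Finset.Icc 1 0 = (∅ : Finset ℕ) from Finset.Icc_eq_empty (by omega)]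
    rw [Finset.sum_empty, zero_div]
    positivity
  set P := ∏ j ∈ Finset.Icc 1 (z-1), ρ j with hPdef
  set R := ∏ j ∈ Finset.Icc z (N-1), ρ j with hRdef
  have hzN : z ≤ N - 1 := by omega
  have hP1 : 1 ≤ P := by
    refine one_le_prod_real _ _ fun j hj => ?_
    rw [Finset.mem_Icc] at hj
    exact hρ1 j hj.1 (by omega)
  have hS : (∑ i ∈ Finset.Icc 1 z, ∏ j ∈ Finset.Icc 1 (i-1), ρ j) ≤ z * P := by
    calc (∑ i ∈ Finset.Icc 1 z, ∏ j ∈ Finset.Icc 1 (i-1), ρ j)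
        ≤ ∑ _i ∈ Finset.Icc 1 z, P := by
          refine Finset.sum_le_sum fun i hi => ?_
          rw [Finset.mem_Icc] at hi
          refine prod_mono_subset_real _ _ _
            (Finset.Icc_subset_Icc le_rfl (by omega)) ?_
          intro j hj
          rw [Finset.mem_Icc] at hj
          exact hρ1 j hj.1 (by omega)
      _ = z * P := by
          rw [Finset.sum_const, Nat.card_Icc, nsmul_eq_mul]
          norm_num
  have hQsplit : (∏ j ∈ Finset.Icc 1 (N-1), ρ j) = P * R := by
    have e1 : Finset.Icc 1 (N-1) = Finset.Ioc 0 (N-1) := Finset.Icc_add_one_left_eq_Ioc 0 (N-1)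
    have e2 : Finset.Icc 1 (z-1) = Finset.Ioc 0 (z-1) := Finset.Icc_add_one_left_eq_Ioc 0 (z-1)
    have e3 : Finset.Icc z (N-1) = Finset.Ioc (z-1) (N-1) := by
      rw [← Finset.Icc_add_one_left_eq_Ioc]
      congr 1
      omega
    rw [hPdef, hRdef, e1, e2, e3]
    exact (Finset.prod_Ioc_consecutive ρ (Nat.zero_le _) (by omega)).symm
  have hQD : P * R ≤ ∑ i ∈ Finset.Icc 1 N, ∏ j ∈ Finset.Icc 1 (i-1), ρ j := by
    rw [← hQsplit]
    exact Finset.single_le_sum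
      (fun i hi => le_trans zero_le_one (hterm1 i hi))
      (Finset.mem_Icc.mpr ⟨hN1, le_refl N⟩)
  have hcard : (Finset.Icc M (N-1)).card = N - M := by
    rw [Nat.card_Icc]; omega
  have hpow : (1 + 2*C*ε)^(N - M) ≤ ∏ j ∈ Finset.Icc M (N-1), ρ j := by
    rw [← hcard, ← Finset.prod_const]
    refine Finset.prod_le_prod (fun j _ => by positivity) ?_
    intro j hj
    rw [Finset.mem_Icc] at hj
    exact hρ2 j hj.1 hj.2
  have hsub : (∏ j ∈ Finset.Icc M (N-1), ρ j) ≤ R := by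
    refine prod_mono_subset_real _ _ _ (Finset.Icc_subset_Icc hzM le_rfl) ?_
    intro j hj
    rw [Finset.mem_Icc] at hj
    exact hρ1 j (by omega) hj.2
  have hNM : ε * K / 4 ≤ ((N - M : ℕ) : ℝ) := by
    have hc : ((N - M : ℕ) : ℝ) = (N:ℝ) - (M:ℝ) := by
      rw [Nat.cast_sub (by omega)]
    rw [hc]
    linarith
  have hexp_le : Real.exp (C*ε) ≤ 1 + 2*C*ε := by
    have h1 : 1 - C*ε ≤ Real.exp (-(C*ε)) := by
      have := Real.add_one_le_exp (-(C*ε))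
      linarith
    have h2 : (0:ℝ) < 1 - C*ε := by linarith
    have h3 : Real.exp (C*ε) = 1 / Real.exp (-(C*ε)) := by
      rw [Real.exp_neg]
      field_simp
    rw [h3, div_le_iff₀ (Real.exp_pos _)]
    nlinarith [mul_pos hC hε]
  have hE : Real.exp (C * ε^2 * K / 4) ≤ (1 + 2*C*ε)^(N - M) := by
    have hCε : 0 < C * ε := mul_pos hC hε
    calc Real.exp (C * ε^2 * K / 4) ≤ Real.exp (C*ε * ((N-M : ℕ) : ℝ)) := by
          refine Real.exp_le_exp.mpr ?_
          calc C * ε^2 * K / 4 = C*ε * (ε * K / 4) := by ring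
            _ ≤ C*ε * ((N-M : ℕ):ℝ) := mul_le_mul_of_nonneg_left hNM (le_of_lt hCε)
      _ = (Real.exp (C*ε))^(N-M) := by
          rw [← Real.exp_nat_mul]
          ring_nf
      _ ≤ (1 + 2*C*ε)^(N - M) :=
          pow_le_pow_left₀ (le_of_lt (Real.exp_pos _)) hexp_le _
  have hR : Real.exp (C * ε^2 * K / 4) ≤ R := le_trans hE (le_trans hpow hsub)
  have hEpos : (0:ℝ) < Real.exp (C * ε^2 * K / 4) := Real.exp_pos _
  have hPpos : (0:ℝ) < P := lt_of_lt_of_le one_pos hP1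
  have hzK : (z:ℝ) ≤ (K:ℝ) := by nlinarith
  calc (∑ i ∈ Finset.Icc 1 z, ∏ j ∈ Finset.Icc 1 (i-1), ρ j) /
        (∑ i ∈ Finset.Icc 1 N, ∏ j ∈ Finset.Icc 1 (i-1), ρ j)
      ≤ (z * P) / (P * Real.exp (C * ε^2 * K / 4)) := by
        refine div_le_div₀ (by positivity) hS (by positivity) ?_
        calc P * Real.exp (C * ε^2 * K / 4) ≤ P * R :=
              mul_le_mul_of_nonneg_left hR (le_of_lt hPpos)
          _ ≤ _ := hQD
    _ = (z:ℝ) / Real.exp (C * ε^2 * K / 4) := by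
        rw [mul_comm (z:ℝ) P, mul_div_mul_left _ _ (ne_of_gt hPpos)]
    _ ≤ Real.exp (C * ε^2 * K / 8) / Real.exp (C * ε^2 * K / 4) := by
        gcongr
        exact le_trans hzK hKexp
    _ = 1 * Real.exp (-(C/8) * ε^2 * K) := by
        rw [← Real.exp_sub, one_mul]
        congr 1
        ring
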